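/- Let z ∈ W^{2,2}([a,b];ℝ^{n_p}) satisfy the boundary condition B_c z_b = 0, where B_c ∈ ℝ^{2n_p×4n_p} has full row rank and B_c B_d is invertible. Then for every s ∈ [a,b], z_s(s) = ∫ₐˢ G₃(s,η) z_ss(η) dη + ∫ₛᵇ G₄(s,η) z_ss(η) dη. -/

import Mathlib

open MeasureTheory Matrix Set

noncomputable section

/-- The block matrix `B_d ∈ ℝ^{4n_p × 2n_p}` with block rows
`[I, 0]`, `[I, (b−a)I]`, `[0, I]`, `[0, I]`. -/
def Bdm (a b : ℝ) (np : ℕ) : Matrix (Fin 4 × Fin np) (Fin 2 × Fin np) ℝ :=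
  Matrix.of fun p q =>
    (![![(1 : Matrix (Fin np) (Fin np) ℝ), 0],
       ![1, (b - a) • 1],
       ![0, 1],
       ![0, 1]] p.1 q.1) p.2 q.2

/-- The block column `col(0, (b−η)I, 0, I) ∈ ℝ^{4n_p × n_p}`. -/
def colE (b : ℝ) (np : ℕ) (η : ℝ) : Matrix (Fin 4 × Fin np) (Fin np) ℝ :=
  Matrix.of fun p j =>
    (![(0 : Matrix (Fin np) (Fin np) ℝ), (b - η) • 1, 0, 1] p.1) p.2 j

/-- `B_f(η) = (B_c B_d)⁻¹ B_c col(0,(b−η)I,0,I)`. -/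
def Bfm (a b : ℝ) {np : ℕ}
    (Bc : Matrix (Fin 2 × Fin np) (Fin 4 × Fin np) ℝ) (η : ℝ) :
    Matrix (Fin 2 × Fin np) (Fin np) ℝ :=
  (Bc * Bdm a b np)⁻¹ * Bc * colE b np η

/-- The block row `[I, (s−a)I] ∈ ℝ^{n_p × 2n_p}`. -/
def rowIA (a : ℝ) (np : ℕ) (s : ℝ) : Matrix (Fin np) (Fin 2 × Fin np) ℝ :=
  Matrix.of fun i q => (![(1 : Matrix (Fin np) (Fin np) ℝ), (s - a) • 1] q.1) i q.2

/-- The block row `[0, I] ∈ ℝ^{n_p × 2n_p}`. -/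
def rowZI (np : ℕ) : Matrix (Fin np) (Fin 2 × Fin np) ℝ :=
  Matrix.of fun i q => (![(0 : Matrix (Fin np) (Fin np) ℝ), 1] q.1) i q.2

/-- `B_a(s,η) = −[I,(s−a)I] B_f(η)`. -/
def Bam (a b : ℝ) {np : ℕ}
    (Bc : Matrix (Fin 2 × Fin np) (Fin 4 × Fin np) ℝ) (s η : ℝ) :
    Matrix (Fin np) (Fin np) ℝ :=
  -(rowIA a np s * Bfm a b Bc η)

/-- `B_b(η) = −[0,I] B_f(η)`. -/
def Bbm (a b : ℝ) {np : ℕ}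
    (Bc : Matrix (Fin 2 × Fin np) (Fin 4 × Fin np) ℝ) (η : ℝ) :
    Matrix (Fin np) (Fin np) ℝ :=
  -(rowZI np * Bfm a b Bc η)

/-- `G₁(s,η) = B_a(s,η) + (s−η)I`. -/
def G1m (a b : ℝ) {np : ℕ}
    (Bc : Matrix (Fin 2 × Fin np) (Fin 4 × Fin np) ℝ) (s η : ℝ) :
    Matrix (Fin np) (Fin np) ℝ :=
  Bam a b Bc s η + (s - η) • 1

/-- `G₂(s,η) = B_a(s,η)`. -/
def G2m (a b : ℝ) {np : ℕ}
    (Bc : Matrix (Fin 2 × Fin np) (Fin 4 × Fin np) ℝ) (s η : ℝ) :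
    Matrix (Fin np) (Fin np) ℝ :=
  Bam a b Bc s η

/-- `G₃(s,η) = B_b(η) + I`. -/
def G3m (a b : ℝ) {np : ℕ}
    (Bc : Matrix (Fin 2 × Fin np) (Fin 4 × Fin np) ℝ) (_s η : ℝ) :
    Matrix (Fin np) (Fin np) ℝ :=
  Bbm a b Bc η + 1

/-- `G₄(s,η) = B_b(η)`. -/
def G4m (a b : ℝ) {np : ℕ}
    (Bc : Matrix (Fin 2 × Fin np) (Fin 4 × Fin np) ℝ) (_s η : ℝ) :
    Matrix (Fin np) (Fin np) ℝ :=
  Bbm a b Bc η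

/-- The boundary vector `z_b = col(z(a), z(b), z_s(a), z_s(b)) ∈ ℝ^{4n_p}`. -/
def zbv (a b : ℝ) {np : ℕ} (z zs : ℝ → Fin np → ℝ) : Fin 4 × Fin np → ℝ :=
  fun p => ![z a, z b, zs a, zs b] p.1 p.2

/-!
Since `G₃ = B_b + I` and `G₄ = B_b`, the right-hand side equals
`∫ₐᵇ B_b(η) z_ss(η) dη + z_s(s) − z_s(a)`, so everything reduces to `∫ₐᵇ B_b z_ss = z_s(a)`.
Now `B_b(η) z_ss(η) = −[0, I] (B_c B_d)⁻¹ B_c col(0, (b−η) z_ss(η), 0, z_ss(η))`, and the last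
column has the primitive `col(z(a), (b−η) z_s(η) + z(η), z_s(a), z_s(η))` (Taylor's formula with
integral remainder), so its integral is `z_b − B_d col(z(a), z_s(a))`. The boundary condition
`B_c z_b = 0` turns `(B_c B_d)⁻¹ B_c` of this into `−col(z(a), z_s(a))`, and `[0, I]` picks out
`−z_s(a)`.
-/

open Function

theorem intervalIntegral.integral_eq_sub_of_hasDerivWithinAt_Icc {E : Type*}
    [NormedAddCommGroup E] [NormedSpace ℝ E] [CompleteSpace E] {f f' : ℝ → E} {a b c d : ℝ}
    (hf : ∀ t ∈ Icc a b, HasDerivWithinAt f (f' t) (Icc a b) t)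
    (hf' : IntegrableOn f' (Icc a b)) (hc : c ∈ Icc a b) (hd : d ∈ Icc a b) :
    ∫ t in c..d, f' t = f d - f c := by
  wlog hcd : c ≤ d generalizing c d
  · rw [intervalIntegral.integral_symm, this hd hc (le_of_not_ge hcd), neg_sub]
  refine intervalIntegral.integral_eq_sub_of_hasDeriv_right_of_le hcd
    (fun t ht => (hf t (Icc_subset_Icc hc.1 hd.2 ht)).continuousWithinAt.mono
      (Icc_subset_Icc hc.1 hd.2)) (fun t ht => ?_)
    (hf'.mono_set (uIcc_subset_Icc hc hd)).intervalIntegrable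
  have ht' : t ∈ Ioo a b := ⟨hc.1.trans_lt ht.1, ht.2.trans_le hd.2⟩
  exact ((hf t (Ioo_subset_Icc_self ht')).hasDerivAt (Icc_mem_nhds ht'.1 ht'.2)).hasDerivWithinAt

theorem intervalIntegral.eval_integral {ι E : Type*} [Fintype ι] [NormedAddCommGroup E]
    [NormedSpace ℝ E] [CompleteSpace E] {f : ℝ → ι → E} {a b : ℝ}
    (hf : IntervalIntegrable f volume a b) (i : ι) :
    (∫ x in a..b, f x) i = ∫ x in a..b, f x i :=
  ((ContinuousLinearMap.proj (R := ℝ) (φ := fun _ : ι => E) i).intervalIntegral_comp_comm hf).symm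

theorem intervalIntegral.integral_mulVec {m n : Type*} [Fintype m] [Fintype n]
    (A : Matrix m n ℝ) {v : ℝ → n → ℝ} {a b : ℝ} (hv : IntervalIntegrable v volume a b) :
    ∫ x in a..b, A *ᵥ v x = A *ᵥ ∫ x in a..b, v x :=
  (LinearMap.toContinuousLinearMap (mulVecLin A)).intervalIntegral_comp_comm hv

theorem MeasureTheory.IntegrableOn.continuousOn_mulVec {X R m n : Type*} [TopologicalSpace X]
    [T2Space X] [MeasurableSpace X] [OpensMeasurableSpace X] {μ : Measure X} {K : Set X}
    [NormedRing R] [SecondCountableTopologyEither X R] [Fintype m] [Fintype n]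
    {A : X → Matrix m n R} {v : X → n → R}
    (hv : IntegrableOn v K μ) (hA : ContinuousOn A K) (hK : IsCompact K) :
    IntegrableOn (fun x => A x *ᵥ v x) K μ := by
  refine integrable_pi_iff.2 fun i => ?_
  simp only [mulVec, dotProduct]
  exact integrable_finsetSum _ fun j _ =>
    IntegrableOn.continuousOn_mul
      ((continuous_apply j).comp_continuousOn ((continuous_apply i).comp_continuousOn hA))
      (hv.eval j) hK

theorem Matrix.inv_mul_mulVec_sub_mulVec {m n R : Type*} [Fintype m] [DecidableEq m] [Fintype n]
    [CommRing R] {C : Matrix m n R} {D : Matrix n m R} (hCD : IsUnit (C * D).det) {x : n → R}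
    (hx : C *ᵥ x = 0) (w : m → R) : ((C * D)⁻¹ * C) *ᵥ (x - D *ᵥ w) = -w := by
  rw [mulVec_sub, ← mulVec_mulVec, hx, mulVec_mulVec, Matrix.mul_assoc,
    nonsing_inv_mul _ hCD, one_mulVec, mulVec_zero, zero_sub]

section Kernel

variable {np : ℕ}

theorem Bdm_mulVec (a b : ℝ) (x y : Fin np → ℝ) :
    Bdm a b np *ᵥ uncurry ![x, y] = uncurry ![x, x + (b - a) • y, y, y] := by
  ext ⟨p, k⟩
  revert p
  simp [Fin.forall_fin_succ, Bdm, mulVec, dotProduct, Fintype.sum_prod_type, one_apply]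

theorem colE_mulVec (b η : ℝ) (x : Fin np → ℝ) :
    colE b np η *ᵥ x = uncurry ![(0 : Fin np → ℝ), (b - η) • x, 0, x] := by
  ext ⟨p, k⟩
  revert p
  simp [Fin.forall_fin_succ, colE, mulVec, dotProduct, one_apply]

theorem rowZI_mulVec (x y : Fin np → ℝ) : rowZI np *ᵥ uncurry ![x, y] = y := by
  ext k
  simp [rowZI, mulVec, dotProduct, Fintype.sum_prod_type, Fin.sum_univ_succ, one_apply]

theorem continuous_colE (b : ℝ) : Continuous (colE b np) := by
  refine continuous_matrix fun ⟨p, k⟩ j => ?_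
  revert p
  simp only [Fin.forall_fin_succ, colE]
  refine ⟨?_, ?_, ?_, ?_, finZeroElim⟩ <;> fun_prop

theorem Bbm_eq_neg_mul (a b : ℝ) (Bc : Matrix (Fin 2 × Fin np) (Fin 4 × Fin np) ℝ) (η : ℝ) :
    Bbm a b Bc η = -(rowZI np * ((Bc * Bdm a b np)⁻¹ * Bc) * colE b np η) := by
  simp only [Bbm, Bfm, Matrix.mul_assoc]

theorem continuous_Bbm (a b : ℝ) (Bc : Matrix (Fin 2 × Fin np) (Fin 4 × Fin np) ℝ) :
    Continuous (Bbm a b Bc) := by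
  simp only [funext (Bbm_eq_neg_mul a b Bc)]
  exact (continuous_const.matrix_mul (continuous_colE b)).neg

theorem hasDerivWithinAt_colE_mulVec_primitive (b : ℝ) (c d : Fin np → ℝ)
    {z zs : ℝ → Fin np → ℝ} {zss : Fin np → ℝ} {S : Set ℝ} {t : ℝ}
    (hz : HasDerivWithinAt z (zs t) S t) (hzs : HasDerivWithinAt zs zss S t) :
    HasDerivWithinAt (fun η => uncurry ![c, (b - η) • zs η + z η, d, zs η])
      (colE b np t *ᵥ zss) S t := by
  have hmid : HasDerivWithinAt (fun η => (b - η) • zs η + z η) ((b - t) • zss) S t := by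
    refine ((((hasDerivWithinAt_id t S).const_sub b).smul hzs).add hz).congr_deriv ?_
    simp
  rw [colE_mulVec, hasDerivWithinAt_pi]
  rintro ⟨p, k⟩
  revert p
  simp only [Fin.forall_fin_succ]
  exact ⟨hasDerivWithinAt_const _ _ _, hasDerivWithinAt_pi.1 hmid k, hasDerivWithinAt_const _ _ _,
    hasDerivWithinAt_pi.1 hzs k, finZeroElim⟩

variable {a b : ℝ} {z zs zss : ℝ → Fin np → ℝ}

theorem integral_colE_mulVec (hab : a ≤ b)
    (hz : ∀ t ∈ Icc a b, HasDerivWithinAt z (zs t) (Icc a b) t)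
    (hzs : ∀ t ∈ Icc a b, HasDerivWithinAt zs (zss t) (Icc a b) t)
    (hzss : IntegrableOn zss (Icc a b)) :
    ∫ η in a..b, colE b np η *ᵥ zss η = zbv a b z zs - Bdm a b np *ᵥ uncurry ![z a, zs a] := by
  rw [intervalIntegral.integral_eq_sub_of_hasDerivWithinAt_Icc
    (fun t ht => hasDerivWithinAt_colE_mulVec_primitive b (z a) (zs a) (hz t ht) (hzs t ht))
    (hzss.continuousOn_mulVec (continuous_colE b).continuousOn isCompact_Icc)
    (left_mem_Icc.2 hab) (right_mem_Icc.2 hab), Bdm_mulVec, sub_self, zero_smul, zero_add,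
    add_comm]
  rfl

theorem integral_Bbm_mulVec (hab : a ≤ b)
    (hz : ∀ t ∈ Icc a b, HasDerivWithinAt z (zs t) (Icc a b) t)
    (hzs : ∀ t ∈ Icc a b, HasDerivWithinAt zs (zss t) (Icc a b) t)
    (hzss : IntegrableOn zss (Icc a b)) {Bc : Matrix (Fin 2 × Fin np) (Fin 4 × Fin np) ℝ}
    (hdet : IsUnit (Bc * Bdm a b np).det) (hbc : Bc *ᵥ zbv a b z zs = 0) :
    ∫ η in a..b, Bbm a b Bc η *ᵥ zss η = zs a := by
  have hU : IntervalIntegrable (fun η => colE b np η *ᵥ zss η) volume a b :=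
    (intervalIntegrable_iff_integrableOn_Icc_of_le hab).2
      (hzss.continuousOn_mulVec (continuous_colE b).continuousOn isCompact_Icc)
  simp only [Bbm_eq_neg_mul, neg_mulVec, ← mulVec_mulVec (zss _)]
  rw [intervalIntegral.integral_neg, intervalIntegral.integral_mulVec _ hU,
    integral_colE_mulVec hab hz hzs hzss, ← mulVec_mulVec,
    inv_mul_mulVec_sub_mulVec hdet hbc, mulVec_neg, neg_neg, rowZI_mulVec]

end Kernel

theorem zs_from_zss_general {np : ℕ} (a b : ℝ)
    (z zs zss : ℝ → Fin np → ℝ)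
    (hz : ∀ s ∈ Icc a b, HasDerivWithinAt z (zs s) (Icc a b) s)
    (hzs : ∀ s ∈ Icc a b, HasDerivWithinAt zs (zss s) (Icc a b) s)
    (hzss : MemLp zss 2 (volume.restrict (Icc a b)))
    (Bc : Matrix (Fin 2 × Fin np) (Fin 4 × Fin np) ℝ)
    (hdet : IsUnit (Bc * Bdm a b np).det)
    (hbc : Bc.mulVec (zbv a b z zs) = 0) :
    ∀ s ∈ Icc a b,
      zs s = (fun i => ∫ η in a..s, (G3m a b Bc s η).mulVec (zss η) i)
           + (fun i => ∫ η in s..b, (G4m a b Bc s η).mulVec (zss η) i) := by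
  intro s hs
  have hab : a ≤ b := hs.1.trans hs.2
  have ha : a ∈ Icc a b := left_mem_Icc.2 hab
  have hb : b ∈ Icc a b := right_mem_Icc.2 hab
  have hzss' : IntegrableOn zss (Icc a b) := hzss.integrable one_le_two
  have hB : IntegrableOn (fun η => Bbm a b Bc η *ᵥ zss η) (Icc a b) :=
    hzss'.continuousOn_mulVec (continuous_Bbm a b Bc).continuousOn isCompact_Icc
  have hint {f : ℝ → Fin np → ℝ} (hf : IntegrableOn f (Icc a b)) {c d : ℝ} (hc : c ∈ Icc a b)
      (hd : d ∈ Icc a b) : IntervalIntegrable f volume c d :=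
    (hf.mono_set (uIcc_subset_Icc hc hd)).intervalIntegrable
  have hG3 : (fun i => ∫ η in a..s, (G3m a b Bc s η *ᵥ zss η) i)
      = ∫ η in a..s, Bbm a b Bc η *ᵥ zss η + zss η := by
    ext i
    rw [intervalIntegral.eval_integral ((hint hB ha hs).add (hint hzss' ha hs))]
    simp [G3m, add_mulVec]
  have hG4 : (fun i => ∫ η in s..b, (G4m a b Bc s η *ᵥ zss η) i)
      = ∫ η in s..b, Bbm a b Bc η *ᵥ zss η :=
    funext fun i => (intervalIntegral.eval_integral (hint hB hs hb) i).symm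
  rw [hG3, hG4, intervalIntegral.integral_add (hint hB ha hs) (hint hzss' ha hs), add_right_comm,
    intervalIntegral.integral_add_adjacent_intervals (hint hB ha hs) (hint hB hs hb),
    integral_Bbm_mulVec hab hz hzs hzss' hdet hbc,
    intervalIntegral.integral_eq_sub_of_hasDerivWithinAt_Icc hzs hzss' ha hs, add_sub_cancel]

/-- If `z ∈ W^{2,2}([a,b];ℝ^{n_p})` satisfies the boundary condition
`B_c z_b = 0` with `B_c` of full row rank and `B_c B_d` invertible, then
`z_s(s) = ∫ₐˢ G₃(s,η) z_ss(η) dη + ∫ₛᵇ G₄(s,η) z_ss(η) dη` for every `s ∈ [a,b]`. -/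
theorem zs_from_zss {np : ℕ} (a b : ℝ) (hab : a < b)
    (z zs zss : ℝ → Fin np → ℝ)
    (hz : ∀ s ∈ Icc a b, HasDerivWithinAt z (zs s) (Icc a b) s)
    (hzs : ∀ s ∈ Icc a b, HasDerivWithinAt zs (zss s) (Icc a b) s)
    (hzss : MemLp zss 2 (volume.restrict (Icc a b)))
    (Bc : Matrix (Fin 2 × Fin np) (Fin 4 × Fin np) ℝ)
    (hrank : Bc.rank = Fintype.card (Fin 2 × Fin np))
    (hdet : IsUnit (Bc * Bdm a b np).det)
    (hbc : Bc.mulVec (zbv a b z zs) = 0) :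
    ∀ s ∈ Icc a b,
      zs s = (fun i => ∫ η in a..s, (G3m a b Bc s η).mulVec (zss η) i)
           + (fun i => ∫ η in s..b, (G4m a b Bc s η).mulVec (zss η) i) :=
  zs_from_zss_general a b z zs zss hz hzs hzss Bc hdet hbc

end
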